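/- Let r ≥ 2, p ≥ 1, n ≥ 0 be integers. Work in the Laurent polynomial ring ℤ[u, u⁻¹], thinking of q = u^{2r}. Then Σ_λ K_{λ,(n)^{r+1}} · u^{p(rκ_λ − |λ|² + r²|λ|)} · s_λ(u^{r(r−1)}, u^{r(r−3)}, …, u^{r(1−r)}), the sum over partitions λ with |λ| = n(r+1), ℓ(λ) ≤ r, and λ_r ≥ n, equals Σ_{a ∈ C_n} d(a) · u^{p(rκ_{ν(a)} + r²|ν(a)| − |ν(a)|²)} · s_{ν(a)}(u^{r(r−1)}, u^{r(r−3)}, …, u^{r(1−r)}), where C_n = { (a_1, …, a_{r−1}) ∈ ℤ_{≥0}^{r−1} : Σ_{k=1}^{r−1} k a_k ≤ n and Σ_{k=1}^{r−1} k a_k ≡ n (mod r) }, ν(a) = (a_1 + ⋯ + a_{r−1}, a_2 + ⋯ + a_{r−1}, …, a_{r−1}), and d(a) is the number of SSYT of shape ν(a) with entries in {1, …, r}. -/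

import Mathlib

/-!
Matching `a` with the partition `λ = ν(a) + (c^r)`, where `c = λ_r` is fixed by `|λ| = n (r + 1)`,
is a bijection between the two index sets, and each summand is unchanged by removing the `r × c`
rectangle:

* In an SSYT of shape `ν + (c^r)` with content `(n^{r+1})`, row `i` of the rectangle holds only
  `i` and `i + 1`, and the number of `i + 1`s is forced, row by row, by the content. So the tableau
  is determined by its cells outside the rectangle, which, lowered by one, form an arbitrary SSYT of
  shape `ν` with entries `≤ r`: `K_{λ,(n)^{r+1}} = d(a)`.
* With entries `≤ r` the rectangle is forced to hold `i` in row `i`, so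
  `s_{ν + (c^r)} = (x_1 ⋯ x_r)^c s_ν`, and `x_1 ⋯ x_r` specializes to `u^0 = 1`.
* The exponents agree because `κ_{ν + (c^r)} = κ_ν + 2c|ν| + rc(c - r)`.
-/

open Finset

/-- A filling `T` of the Young diagram of `lam` (0-indexed rows and columns, with
junk value `0` outside the diagram) is a semistandard Young tableau. -/
def IsSSYT (lam : ℕ → ℕ) (T : ℕ → ℕ → ℕ) : Prop :=
  (∀ i j, j < lam i → 1 ≤ T i j) ∧
  (∀ i j, j + 1 < lam i → T i j ≤ T i (j + 1)) ∧
  (∀ i j, j < lam (i + 1) → T i j < T (i + 1) j) ∧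
  (∀ i j, lam i ≤ j → T i j = 0)

/-- The number of occurrences of the value `v` in the filling `T` of the diagram of `lam`. -/
noncomputable def content (lam : ℕ → ℕ) (T : ℕ → ℕ → ℕ) (v : ℕ) : ℕ :=
  Set.ncard {p : ℕ × ℕ | p.2 < lam p.1 ∧ T p.1 p.2 = v}

/-- The Kostka number `K_{lam, (n)^m}`: the number of SSYT of shape `lam` in which each of
the values `1, …, m` occurs exactly `n` times and no other values occur. -/
noncomputable def kostka (lam : ℕ → ℕ) (n m : ℕ) : ℕ :=
  Set.ncard {T : ℕ → ℕ → ℕ | IsSSYT lam T ∧ (∀ i j, j < lam i → T i j ≤ m) ∧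
    ∀ v, 1 ≤ v → v ≤ m → content lam T v = n}

/-- The number of SSYT of shape `lam` with entries in `{1, …, r}`. -/
noncomputable def ssytCount (lam : ℕ → ℕ) (r : ℕ) : ℕ :=
  Set.ncard {T : ℕ → ℕ → ℕ | IsSSYT lam T ∧ ∀ i j, j < lam i → T i j ≤ r}

/-- The number of SSYT of shape `lam` with entries in `{1, …, r}` and content `mu`
(the value `v+1` occurring exactly `mu v` times, `v : Fin r`). -/
noncomputable def kostkaC (lam : ℕ → ℕ) (r : ℕ) (mu : Fin r → ℕ) : ℕ :=
  Set.ncard {T : ℕ → ℕ → ℕ | IsSSYT lam T ∧ (∀ i j, j < lam i → T i j ≤ r) ∧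
    ∀ v : Fin r, content lam T ((v : ℕ) + 1) = mu v}

/-- The Schur polynomial `s_lam(x_1, …, x_r)`, where `w = |lam|` is the weight of `lam`:
the generating function of SSYT of shape `lam` with entries in `{1, …, r}` by content. -/
noncomputable def schur (r : ℕ) (lam : ℕ → ℕ) (w : ℕ) : MvPolynomial (Fin r) ℤ :=
  ∑ mu ∈ Fintype.piFinset (fun _ : Fin r => Finset.range (w + 1)),
    (kostkaC lam r mu : ℤ) • ∏ i, MvPolynomial.X i ^ mu i

/-- `κ_lam = 2 Σ_{i ≥ 1} Σ_{j=1}^{lam_i} (j - i)`, computed for a partition of length `≤ r`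
(rows are 0-indexed, so row `i` of the function is row `i+1` of the partition). -/
def kappa (r : ℕ) (lam : ℕ → ℕ) : ℤ :=
  2 * ∑ i ∈ Finset.range r, ∑ j ∈ Finset.Icc 1 (lam i), ((j : ℤ) - ((i : ℤ) + 1))


/-- Principal specialization `x_i = u^{r(r+1-2i)}` (1-indexed `i`) of the Schur
polynomial in `r` variables, as a Laurent polynomial in `u` (so that `x_i = q^{(r+1-2i)/2}`
with `q = u^{2r}`). -/
noncomputable def schurSpecU (r : ℕ) (lam : ℕ → ℕ) (w : ℕ) : LaurentPolynomial ℤ :=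
  MvPolynomial.aeval
    (fun i : Fin r => LaurentPolynomial.T ((r : ℤ) * ((r : ℤ) - 1 - 2 * (i : ℕ)))) (schur r lam w)

/-- Extension of a tuple `f : Fin r → ℕ` to `ℕ → ℕ` by zero. -/
def ext (r : ℕ) (f : Fin r → ℕ) : ℕ → ℕ :=
  fun i => if h : i < r then f ⟨i, h⟩ else 0

/-- The weighted sum `Σ_{k=1}^{r-1} k a_k` of a tuple `a = (a_1, …, a_{r-1})`
(0-indexed: `a ⟨k⟩` is `a_{k+1}`). -/
def wgt (r : ℕ) (a : Fin (r - 1) → ℕ) : ℕ :=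
  ∑ k : Fin (r - 1), ((k : ℕ) + 1) * a k

/-- The partition `ν(a) = (a_1 + ⋯ + a_{r-1}, a_2 + ⋯ + a_{r-1}, …, a_{r-1})`
associated to a tuple `a = (a_1, …, a_{r-1})`, 0-indexed. -/
def nu (r : ℕ) (a : Fin (r - 1) → ℕ) : ℕ → ℕ :=
  fun j => ∑ k : Fin (r - 1), if j ≤ (k : ℕ) then a k else 0

namespace IsSSYT

variable {lam : ℕ → ℕ} {T : ℕ → ℕ → ℕ}

theorem row_mono (hT : IsSSYT lam T) {i j j' : ℕ} (hjj' : j ≤ j') (hj' : j' < lam i) :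
    T i j ≤ T i j' := by
  induction j', hjj' using Nat.le_induction with
  | base => rfl
  | succ m _ ih => exact (ih (by omega)).trans (hT.2.1 i m hj')

theorem add_sub_le (hT : IsSSYT lam T) (hlam : Antitone lam) {i k j : ℕ} (hik : i ≤ k)
    (hj : j < lam k) : T i j + (k - i) ≤ T k j := by
  induction k, hik using Nat.le_induction with
  | base => simp
  | succ m hm ih =>
    have := hT.2.2.1 m j hj
    have := ih (hj.trans_le (hlam m.le_succ))
    omega

theorem succ_le (hT : IsSSYT lam T) (hlam : Antitone lam) {i j : ℕ} (hj : j < lam i) :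
    i + 1 ≤ T i j := by
  have := hT.add_sub_le hlam (Nat.zero_le i) hj
  have := hT.1 0 j (hj.trans_le (hlam (Nat.zero_le i)))
  omega

end IsSSYT

section Content

variable {lam : ℕ → ℕ} {T : ℕ → ℕ → ℕ} {R : ℕ}

theorem content_eq_sum (T : ℕ → ℕ → ℕ) (v : ℕ) (hR : ∀ i, R ≤ i → lam i = 0) :
    content lam T v = ∑ i ∈ range R, #{j ∈ range (lam i) | T i j = v} := by
  set B := ∑ i ∈ range R, lam i
  have hcell : ∀ i j, j < lam i → i < R ∧ j < B := fun i j hj => by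
    by_cases hi : i < R
    · exact ⟨hi, hj.trans_le (single_le_sum (fun _ _ => Nat.zero_le _) (mem_range.2 hi))⟩
    · simp [hR i (by omega)] at hj
  have hset : {p : ℕ × ℕ | p.2 < lam p.1 ∧ T p.1 p.2 = v}
      = ↑{p ∈ range R ×ˢ range B | p.2 < lam p.1 ∧ T p.1 p.2 = v} := by
    ext p
    simp only [Set.mem_ofPred_eq, coe_filter, mem_product, mem_range]
    exact ⟨fun h => ⟨hcell _ _ h.1, h⟩, fun h => h.2⟩
  rw [content, hset, Set.ncard_coe_finset, card_filter, sum_product]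
  refine sum_congr rfl fun i _ => ?_
  rw [← card_filter]
  congr 1
  ext j
  simp only [mem_filter, mem_range]
  exact ⟨fun h => ⟨h.2.1, h.2.2⟩, fun h => ⟨(hcell i j h.1).2, h⟩⟩

theorem sum_content (hR : ∀ i, R ≤ i → lam i = 0) {M : ℕ}
    (hM : ∀ i j, j < lam i → T i j ≤ M) :
    ∑ v ∈ range (M + 1), content lam T v = ∑ i ∈ range R, lam i := by
  simp_rw [content_eq_sum T _ hR]
  rw [sum_comm]
  refine sum_congr rfl fun i _ => ?_
  rw [← card_eq_sum_card_fiberwise fun j hj => ?_, card_range]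
  exact mem_range.2 (Nat.lt_succ_of_le (hM i j (mem_range.1 hj)))

theorem content_le (T : ℕ → ℕ → ℕ) (v : ℕ) (hR : ∀ i, R ≤ i → lam i = 0) :
    content lam T v ≤ ∑ i ∈ range R, lam i := by
  rw [content_eq_sum T v hR]
  exact sum_le_sum fun i _ => (card_filter_le _ _).trans (card_range _).le

theorem content_zero (hT : ∀ i j, j < lam i → 1 ≤ T i j) : content lam T 0 = 0 := by
  have hempty : {p : ℕ × ℕ | p.2 < lam p.1 ∧ T p.1 p.2 = 0} = ∅ :=
    Set.eq_empty_of_forall_notMem fun p ⟨hp, h0⟩ => by have := hT p.1 p.2 hp; omega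
  rw [content, hempty, Set.ncard_empty]

theorem content_congr {T' : ℕ → ℕ → ℕ} (h : ∀ i j, j < lam i → T i j = T' i j) (v : ℕ) :
    content lam T v = content lam T' v := by
  unfold content
  congr 1
  ext p
  simp only [Set.mem_ofPred_eq]
  exact and_congr_right fun hp => by rw [h _ _ hp]

end Content

def addRect (r c : ℕ) (ν : ℕ → ℕ) : ℕ → ℕ := fun i => if i < r then c + ν i else 0

def glue (r c : ℕ) (ν : ℕ → ℕ) (R S : ℕ → ℕ → ℕ) : ℕ → ℕ → ℕ :=
  fun i j => if j < addRect r c ν i then if j < c then R i j else S i (j - c) else 0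

section Glue

variable {r c : ℕ} {ν : ℕ → ℕ} {R S T : ℕ → ℕ → ℕ} {i j : ℕ}

theorem addRect_of_lt (hi : i < r) : addRect r c ν i = c + ν i := if_pos hi

theorem addRect_of_le (hi : r ≤ i) : addRect r c ν i = 0 := if_neg (by omega)

theorem lt_of_lt_addRect (hj : j < addRect r c ν i) : i < r := by
  by_contra hi
  rw [addRect_of_le (by omega)] at hj
  omega

theorem add_lt_addRect (hνr : ∀ i, r ≤ i → ν i = 0) (hj : j < ν i) :
    c + j < addRect r c ν i := by
  by_cases hi : i < r
  · rw [addRect_of_lt hi]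
    omega
  · rw [hνr i (by omega)] at hj
    omega

theorem addRect_le_add (hj : ν i ≤ j) : addRect r c ν i ≤ c + j := by
  unfold addRect
  split_ifs <;> omega

theorem antitone_addRect (hν : Antitone ν) : Antitone (addRect r c ν) := by
  intro i i' hii'
  by_cases hi' : i' < r
  · rw [addRect_of_lt hi', addRect_of_lt (by omega)]
    exact Nat.add_le_add_left (hν hii') c
  · rw [addRect_of_le (by omega)]
    exact Nat.zero_le _

theorem sum_addRect : ∑ i ∈ range r, addRect r c ν i = r * c + ∑ i ∈ range r, ν i := by
  rw [sum_congr rfl fun i hi => addRect_of_lt (mem_range.1 hi), sum_add_distrib, sum_const,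
    card_range, smul_eq_mul]

theorem mem_addRect_cases (hj : j < addRect r c ν i) : i < r ∧ (j < c ∨ ∃ k < ν i, j = c + k) := by
  have hi := lt_of_lt_addRect hj
  rw [addRect_of_lt hi] at hj
  refine ⟨hi, (lt_or_ge j c).imp_right fun hjc => ⟨j - c, by omega, by omega⟩⟩

theorem glue_of_lt (hi : i < r) (hj : j < c) : glue r c ν R S i j = R i j := by
  rw [glue, addRect_of_lt hi, if_pos (by omega), if_pos hj]

theorem glue_add (hi : i < r) (hj : j < ν i) : glue r c ν R S i (c + j) = S i j := by
  rw [glue, addRect_of_lt hi, if_pos (by omega), if_neg (by omega), Nat.add_sub_cancel_left]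

theorem glue_of_le (hj : addRect r c ν i ≤ j) : glue r c ν R S i j = 0 := by
  rw [glue, if_neg (by omega)]

theorem glue_congr {R' S' : ℕ → ℕ → ℕ} (hR : ∀ i j, i < r → j < c → R i j = R' i j)
    (hS : ∀ i j, j < ν i → S i j = S' i j) : glue r c ν R S = glue r c ν R' S' := by
  funext i j
  unfold glue
  split_ifs with hj hc
  · exact hR i j (lt_of_lt_addRect hj) hc
  · rw [addRect_of_lt (lt_of_lt_addRect hj)] at hj
    exact hS i (j - c) (by omega)
  · rfl

theorem glue_strip (hT : ∀ i j, addRect r c ν i ≤ j → T i j = 0) :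
    glue r c ν T (fun i j => T i (c + j)) = T := by
  funext i j
  unfold glue
  split_ifs with hj hc
  · rfl
  · show T i (c + (j - c)) = T i j
    rw [Nat.add_sub_cancel' (by omega)]
  · exact (hT i j (by omega)).symm

theorem strip_glue (hνr : ∀ i, r ≤ i → ν i = 0) (hS : ∀ i j, ν i ≤ j → S i j = 0) :
    (fun i j => glue r c ν R S i (c + j)) = S := by
  funext i j
  by_cases hj : j < ν i
  · exact glue_add (lt_of_lt_addRect (add_lt_addRect (c := c) hνr hj)) hj
  · rw [glue_of_le (addRect_le_add (by omega)), hS i j (by omega)]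

theorem glue_le {M : ℕ} (hR : ∀ i j, i < r → j < c → R i j ≤ M)
    (hS : ∀ i j, j < ν i → S i j ≤ M) (hj : j < addRect r c ν i) : glue r c ν R S i j ≤ M := by
  obtain ⟨hi, hjc | ⟨k, hk, rfl⟩⟩ := mem_addRect_cases hj
  · exact (glue_of_lt hi hjc).trans_le (hR i j hi hjc)
  · exact (glue_add hi hk).trans_le (hS i k hk)

theorem isSSYT_glue (hν : Antitone ν) (hS : IsSSYT ν S) (hR1 : ∀ i j, i < r → j < c → 1 ≤ R i j)
    (hRrow : ∀ i j, i < r → j + 1 < c → R i j ≤ R i (j + 1))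
    (hRcol : ∀ i j, i + 1 < r → j < c → R i j < R (i + 1) j)
    (hRS : ∀ i j, i < r → j < c → 0 < ν i → R i j ≤ S i 0) :
    IsSSYT (addRect r c ν) (glue r c ν R S) := by
  refine ⟨fun i j hj => ?_, fun i j hj => ?_, fun i j hj => ?_, fun i j hj => glue_of_le hj⟩
  · obtain ⟨hi, hjc | ⟨k, hk, rfl⟩⟩ := mem_addRect_cases hj
    · exact (hR1 i j hi hjc).trans_eq (glue_of_lt hi hjc).symm
    · exact (hS.1 i k hk).trans_eq (glue_add hi hk).symm
  · obtain ⟨hi, hjc | ⟨k, hk, hjk⟩⟩ := mem_addRect_cases hj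
    · rw [glue_of_lt hi (by omega), glue_of_lt hi hjc]
      exact hRrow i j hi hjc
    rcases k with _ | k
    · rw [glue_of_lt hi (by omega), hjk, glue_add hi hk]
      exact hRS i j hi (by omega) hk
    · rw [hjk, show j = c + k by omega, glue_add hi (by omega), glue_add hi hk]
      exact hS.2.1 i k hk
  · obtain ⟨hi, hjc | ⟨k, hk, rfl⟩⟩ := mem_addRect_cases hj
    · rw [glue_of_lt (by omega) hjc, glue_of_lt hi hjc]
      exact hRcol i j hi hjc
    · have : ν (i + 1) ≤ ν i := hν (by omega)
      rw [glue_add (by omega) (by omega), glue_add hi hk]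
      exact hS.2.2.1 i k hk

theorem content_glue (hνr : ∀ i, r ≤ i → ν i = 0) (v : ℕ) :
    content (addRect r c ν) (glue r c ν R S) v
      = ∑ i ∈ range r, #{j ∈ range c | R i j = v} + content ν S v := by
  rw [content_eq_sum _ v fun i => addRect_of_le, content_eq_sum S v hνr, ← sum_add_distrib]
  refine sum_congr rfl fun i hi => ?_
  have hi := mem_range.1 hi
  simp_rw [card_filter]
  rw [addRect_of_lt hi, sum_range_add]
  congr 1
  · exact sum_congr rfl fun j hj => by rw [glue_of_lt hi (mem_range.1 hj)]
  · exact sum_congr rfl fun j hj => by rw [glue_add hi (mem_range.1 hj)]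

theorem IsSSYT.strip (hT : IsSSYT (addRect r c ν) T) (hνr : ∀ i, r ≤ i → ν i = 0) :
    IsSSYT ν (fun i j => T i (c + j)) :=
  ⟨fun i _ hj => hT.1 i _ (add_lt_addRect hνr hj),
    fun i _ hj => hT.2.1 i _ (add_lt_addRect hνr hj),
    fun i _ hj => hT.2.2.1 i _ (add_lt_addRect hνr hj),
    fun i _ hj => hT.2.2.2 i _ (addRect_le_add hj)⟩

theorem IsSSYT.le_of_addRect (hT : IsSSYT (addRect r c ν) T) (hν : Antitone ν) {d : ℕ}
    (hM : ∀ i j, j < addRect r c ν i → T i j ≤ r + d) (hi : i < r) (hj : j < c) :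
    T i j ≤ i + 1 + d := by
  have hj' : j < addRect r c ν (r - 1) := by
    rw [addRect_of_lt (by omega)]
    omega
  have := hT.add_sub_le (antitone_addRect hν) (show i ≤ r - 1 by omega) hj'
  have := hM _ _ hj'
  omega

end Glue

theorem iff_le_add_card_filter_range {P : ℕ → Prop} [DecidablePred P] {c j : ℕ}
    (hP : ∀ j j', j ≤ j' → j' < c → P j → P j') (hj : j < c) :
    P j ↔ c ≤ j + #{j ∈ range c | P j} := by
  constructor
  · intro hPj
    have : Ico j c ⊆ {j ∈ range c | P j} := fun x hx => by
      rw [mem_Ico] at hx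
      exact mem_filter.2 ⟨mem_range.2 hx.2, hP j x hx.1 hx.2 hPj⟩
    have := card_le_card this
    rw [Nat.card_Ico] at this
    omega
  · intro hc
    by_contra hPj
    have : {j ∈ range c | P j} ⊆ Ico (j + 1) c := fun x hx => by
      rw [mem_filter, mem_range] at hx
      rw [mem_Ico]
      refine ⟨?_, hx.1⟩
      by_contra hxj
      exact hPj (hP x j (by omega) hj hx.2)
    have := card_le_card this
    rw [Nat.card_Ico] at this
    omega

/-- In 1-indexed terms, row `v` holds `v`, except for its last `E v` cells, which hold `v + 1`. -/
def rectFill (c : ℕ) (E : ℕ → ℕ) : ℕ → ℕ → ℕ :=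
  fun i j => i + 1 + if c ≤ j + E (i + 1) then 1 else 0

section RectFill

variable {c : ℕ} {E : ℕ → ℕ}

theorem card_rectFill_row {i : ℕ} (hE : E (i + 1) ≤ c) (v : ℕ) :
    #{j ∈ range c | rectFill c E i j = v}
      = (if i + 1 = v then c - E (i + 1) else 0) + (if i + 2 = v then E (i + 1) else 0) := by
  unfold rectFill
  by_cases h1 : i + 1 = v
  · have : {j ∈ range c | i + 1 + (if c ≤ j + E (i + 1) then 1 else 0) = v}
        = range (c - E (i + 1)) := by
      ext j
      simp only [mem_filter, mem_range]
      split_ifs <;> omega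
    rw [this, card_range, if_pos h1, if_neg (by omega), add_zero]
  by_cases h2 : i + 2 = v
  · have : {j ∈ range c | i + 1 + (if c ≤ j + E (i + 1) then 1 else 0) = v}
        = Ico (c - E (i + 1)) c := by
      ext j
      simp only [mem_filter, mem_range, mem_Ico]
      split_ifs <;> omega
    rw [this, Nat.card_Ico, if_neg h1, if_pos h2]
    omega
  · rw [if_neg h1, if_neg h2, card_eq_zero, filter_eq_empty_iff]
    intro j _
    split_ifs <;> omega

theorem sum_card_rectFill {r : ℕ} (hE : ∀ i < r, E (i + 1) ≤ c) {v : ℕ} (hv1 : 1 ≤ v)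
    (hv : v ≤ r + 1) :
    ∑ i ∈ range r, #{j ∈ range c | rectFill c E i j = v}
      = (if v ≤ r then c - E v else 0) + (if 2 ≤ v then E (v - 1) else 0) := by
  have hrow : ∀ i ∈ range r, #{j ∈ range c | rectFill c E i j = v}
      = (if v - 1 = i then c - E v else 0)
        + (if v - 2 = i then (if 2 ≤ v then E (v - 1) else 0) else 0) := by
    intro i hi
    rw [card_rectFill_row (hE i (mem_range.1 hi))]
    congr 1 <;> split_ifs <;> first | omega | (subst_vars; rfl)
  rw [sum_congr rfl hrow, sum_add_distrib, sum_ite_eq, sum_ite_eq]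
  simp only [mem_range]
  congr 1
  · split_ifs <;> first | rfl | omega
  · split_ifs <;> first | rfl | omega

end RectFill

def shiftUp (ν : ℕ → ℕ) (S : ℕ → ℕ → ℕ) : ℕ → ℕ → ℕ :=
  fun i j => if j < ν i then S i j + 1 else 0

section Shift

variable {ν : ℕ → ℕ} {S : ℕ → ℕ → ℕ}

theorem IsSSYT.shiftUp (hS : IsSSYT ν S) : IsSSYT ν (shiftUp ν S) := by
  refine ⟨fun i j hj => ?_, fun i j hj => ?_, fun i j hj => ?_, fun i j hj => if_neg (by omega)⟩
  · simp [_root_.shiftUp, hj]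
  · have := hS.2.1 i j hj
    unfold _root_.shiftUp
    split_ifs <;> omega
  · have := hS.2.2.1 i j hj
    unfold _root_.shiftUp
    split_ifs <;> omega

theorem content_shiftUp (v : ℕ) : content ν (shiftUp ν S) (v + 1) = content ν S v := by
  rw [content_congr (T := shiftUp ν S) (T' := fun i j => S i j + 1) fun i j hj => if_pos hj]
  simp [content]

theorem IsSSYT.sub_one (hS : IsSSYT ν S) (h2 : ∀ i j, j < ν i → 2 ≤ S i j) :
    IsSSYT ν (fun i j => S i j - 1) := by
  refine ⟨fun i j hj => ?_, fun i j hj => ?_, fun i j hj => ?_, fun i j hj => ?_⟩ <;> dsimp only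
  · have := h2 i j hj
    omega
  · have := hS.2.1 i j hj
    omega
  · have := hS.2.2.1 i j hj
    have := h2 (i + 1) j hj
    omega
  · simp [hS.2.2.2 i j hj]

end Shift

/-- Chosen so that `E = kostkaCounts c n ν S` satisfies
`c - E v + E (v - 1) + content ν S (v - 1) = n` for `1 ≤ v ≤ r`, i.e. so that every value occurs
`n` times in `kostkaFill r c n ν S`. -/
noncomputable def kostkaCounts (c n : ℕ) (ν : ℕ → ℕ) (S : ℕ → ℕ → ℕ) (v : ℕ) : ℕ :=
  v * (c - n) + ∑ u ∈ range v, content ν S u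

def rowCounts (c : ℕ) (T : ℕ → ℕ → ℕ) (v : ℕ) : ℕ := #{j ∈ range c | T (v - 1) j = v + 1}

/-- Truncated subtraction keeps the value `0` outside the diagram. -/
def kostkaStrip (c : ℕ) (T : ℕ → ℕ → ℕ) : ℕ → ℕ → ℕ := fun i j => T i (c + j) - 1

noncomputable def kostkaFill (r c n : ℕ) (ν : ℕ → ℕ) (S : ℕ → ℕ → ℕ) : ℕ → ℕ → ℕ :=
  glue r c ν (rectFill c (kostkaCounts c n ν S)) (shiftUp ν S)

section Kostka

variable {r c n : ℕ} {ν : ℕ → ℕ} {S T : ℕ → ℕ → ℕ}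

theorem kostkaCounts_succ (v : ℕ) :
    kostkaCounts c n ν S (v + 1) = kostkaCounts c n ν S v + (c - n) + content ν S v := by
  simp only [kostkaCounts, sum_range_succ]
  ring

theorem kostkaCounts_mono : Monotone (kostkaCounts c n ν S) :=
  monotone_nat_of_le_succ fun v => by rw [kostkaCounts_succ]; omega

theorem kostkaCounts_add_content (hνr : ∀ i, r ≤ i → ν i = 0) (hcn : n ≤ c)
    (hsum : r * c + ∑ i ∈ range r, ν i = n * (r + 1)) (hSr : ∀ i j, j < ν i → S i j ≤ r) :
    kostkaCounts c n ν S r + content ν S r = n := by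
  have hcontent := sum_content hνr hSr
  rw [sum_range_succ] at hcontent
  have : r * n ≤ r * c := Nat.mul_le_mul_left r hcn
  have : n * (r + 1) = r * n + n := by ring
  rw [kostkaCounts, Nat.mul_sub r c n]
  omega

theorem content_glue_rectFill (hνr : ∀ i, r ≤ i → ν i = 0) {N : ℕ → ℕ}
    (hN : ∀ i < r, N (i + 1) ≤ c) {v : ℕ} (hv1 : 1 ≤ v) (hv : v ≤ r + 1) :
    content (addRect r c ν) (glue r c ν (rectFill c N) (shiftUp ν S)) v
      = (if v ≤ r then c - N v else 0) + (if 2 ≤ v then N (v - 1) else 0)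
        + content ν S (v - 1) := by
  obtain ⟨v, rfl⟩ := Nat.exists_eq_add_of_le' hv1
  rw [content_glue hνr, sum_card_rectFill hN hv1 hv, content_shiftUp, Nat.add_sub_cancel]

theorem isSSYT_kostkaFill (hν : Antitone ν) (hS : IsSSYT ν S) :
    IsSSYT (addRect r c ν) (kostkaFill r c n ν S) := by
  refine isSSYT_glue hν hS.shiftUp (fun i j _ _ => ?_) (fun i j _ _ => ?_)
    (fun i j _ _ => ?_) (fun i j _ _ hνi => ?_) <;> unfold rectFill
  · omega
  · split_ifs <;> omega
  · have : kostkaCounts c n ν S (i + 1) ≤ kostkaCounts c n ν S (i + 1 + 1) :=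
      kostkaCounts_mono (by omega)
    split_ifs <;> omega
  · have := hS.succ_le hν hνi
    rw [shiftUp, if_pos hνi]
    split_ifs <;> omega

theorem kostkaCounts_le (hνr : ∀ i, r ≤ i → ν i = 0) (hcn : n ≤ c)
    (hsum : r * c + ∑ i ∈ range r, ν i = n * (r + 1)) (hSr : ∀ i j, j < ν i → S i j ≤ r)
    {v : ℕ} (hv : v ≤ r) : kostkaCounts c n ν S v ≤ c := by
  have : kostkaCounts c n ν S v ≤ kostkaCounts c n ν S r := kostkaCounts_mono hv
  have := kostkaCounts_add_content hνr hcn hsum hSr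
  omega

theorem content_kostkaFill (hνr : ∀ i, r ≤ i → ν i = 0) (hcn : n ≤ c)
    (hsum : r * c + ∑ i ∈ range r, ν i = n * (r + 1)) (hS : IsSSYT ν S)
    (hSr : ∀ i j, j < ν i → S i j ≤ r) {v : ℕ} (hv1 : 1 ≤ v) (hv : v ≤ r + 1) :
    content (addRect r c ν) (kostkaFill r c n ν S) v = n := by
  have hE : ∀ v ≤ r, kostkaCounts c n ν S v ≤ c := fun v hv => kostkaCounts_le hνr hcn hsum hSr hv
  rw [kostkaFill, content_glue_rectFill hνr (fun i hi => hE (i + 1) hi) hv1 hv]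
  obtain ⟨w, rfl⟩ := Nat.exists_eq_add_of_le' hv1
  rw [Nat.add_sub_cancel]
  have hstep := kostkaCounts_succ (c := c) (n := n) (ν := ν) (S := S) w
  have hlast := kostkaCounts_add_content hνr hcn hsum hSr
  have hS0 := content_zero hS.1
  have hE0 : kostkaCounts c n ν S 0 = 0 := by simp [kostkaCounts]
  rcases Nat.lt_or_ge w r with hwr | hwr
  · have := hE (w + 1) hwr
    rcases Nat.eq_zero_or_pos w with rfl | hw <;> split_ifs <;> omega
  · obtain rfl : w = r := by omega
    rcases Nat.eq_zero_or_pos w with rfl | hw <;> split_ifs <;> omega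

theorem kostkaFill_mem (hν : Antitone ν) (hνr : ∀ i, r ≤ i → ν i = 0) (hcn : n ≤ c)
    (hsum : r * c + ∑ i ∈ range r, ν i = n * (r + 1)) (hS : IsSSYT ν S)
    (hSr : ∀ i j, j < ν i → S i j ≤ r) :
    IsSSYT (addRect r c ν) (kostkaFill r c n ν S)
      ∧ (∀ i j, j < addRect r c ν i → kostkaFill r c n ν S i j ≤ r + 1)
      ∧ ∀ v, 1 ≤ v → v ≤ r + 1 → content (addRect r c ν) (kostkaFill r c n ν S) v = n := by
  refine ⟨isSSYT_kostkaFill hν hS, fun i j hj => glue_le (fun i j hi _ => ?_) (fun i j hj => ?_) hj,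
    fun v hv1 hv => content_kostkaFill hνr hcn hsum hS hSr hv1 hv⟩
  · unfold rectFill
    split_ifs <;> omega
  · have := hSr i j hj
    rw [shiftUp, if_pos hj]
    omega

theorem eq_rectFill_rowCounts (hν : Antitone ν) (hT : IsSSYT (addRect r c ν) T)
    (hTle : ∀ i j, j < addRect r c ν i → T i j ≤ r + 1) {i j : ℕ} (hi : i < r) (hj : j < c) :
    T i j = rectFill c (rowCounts c T) i j := by
  have hcell : ∀ {j}, j < c → j < addRect r c ν i := fun hj => by
    rw [addRect_of_lt hi]
    omega
  have hbounds : ∀ {j}, j < c → i + 1 ≤ T i j ∧ T i j ≤ i + 2 := fun hj =>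
    ⟨hT.succ_le (antitone_addRect hν) (hcell hj), hT.le_of_addRect hν hTle hi hj⟩
  have hup : ∀ j j', j ≤ j' → j' < c → T i j = i + 1 + 1 → T i j' = i + 1 + 1 :=
      fun j j' hjj' hj' h => by
    have := hT.row_mono hjj' (hcell hj')
    have := hbounds hj'
    omega
  have hiff := iff_le_add_card_filter_range hup hj
  have := hbounds hj
  rw [rectFill, rowCounts, Nat.add_sub_cancel]
  split_ifs <;> omega

theorem two_le_strip (hν : Antitone ν) (hνr : ∀ i, r ≤ i → ν i = 0) (hcn : n ≤ c)
    (hT : IsSSYT (addRect r c ν) T) (hcont : content (addRect r c ν) T 1 = n) {i j : ℕ}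
    (hj : j < ν i) : 2 ≤ T i (c + j) := by
  have hcell := add_lt_addRect hνr hj (c := c)
  have hi := lt_of_lt_addRect hcell
  have := hT.succ_le (antitone_addRect hν) hcell
  by_contra hlt
  obtain rfl : i = 0 := by omega
  have hrow : range (c + j + 1) ⊆ {x ∈ range (addRect r c ν 0) | T 0 x = 1} := fun x hx => by
    rw [mem_range] at hx
    have := hT.row_mono (show x ≤ c + j by omega) hcell
    have := hT.1 0 x (by omega)
    exact mem_filter.2 ⟨mem_range.2 (by omega), by omega⟩
  have hle := (card_le_card hrow).trans <| single_le_sum (f := fun i =>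
    #{x ∈ range (addRect r c ν i) | T i x = 1}) (fun _ _ => Nat.zero_le _) (mem_range.2 hi)
  rw [card_range] at hle
  have := content_eq_sum (lam := addRect r c ν) T 1 fun i => addRect_of_le
  omega

theorem eq_kostkaCounts (hcn : n ≤ c) (hS0 : content ν S 0 = 0) {N : ℕ → ℕ}
    (hN : ∀ v, 1 ≤ v → v ≤ r → N v ≤ c
      ∧ (c - N v) + (if 2 ≤ v then N (v - 1) else 0) + content ν S (v - 1) = n)
    {v : ℕ} (hv1 : 1 ≤ v) (hv : v ≤ r) : N v = kostkaCounts c n ν S v := by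
  induction v, hv1 using Nat.le_induction with
  | base =>
    obtain ⟨hN1, h1⟩ := hN 1 le_rfl hv
    rw [if_neg (by omega), Nat.sub_self, hS0] at h1
    rw [kostkaCounts, sum_range_one, hS0]
    omega
  | succ v hv1 ih =>
    obtain ⟨hNv, hv'⟩ := hN (v + 1) (by omega) hv
    rw [if_pos (by omega), Nat.add_sub_cancel, ih (by omega)] at hv'
    rw [kostkaCounts_succ]
    omega

theorem eq_kostkaFill (hν : Antitone ν) (hνr : ∀ i, r ≤ i → ν i = 0) (hcn : n ≤ c)
    (hT : IsSSYT (addRect r c ν) T) (hTle : ∀ i j, j < addRect r c ν i → T i j ≤ r + 1)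
    (hcont : ∀ v, 1 ≤ v → v ≤ r + 1 → content (addRect r c ν) T v = n) :
    kostkaFill r c n ν (kostkaStrip c T) = T := by
  have h2 : ∀ i j, j < ν i → 2 ≤ T i (c + j) := fun i j hj =>
    two_le_strip hν hνr hcn hT (hcont 1 le_rfl (by omega)) hj
  have hshift : ∀ i j, j < ν i → shiftUp ν (kostkaStrip c T) i j = T i (c + j) := fun i j hj => by
    have := h2 i j hj
    rw [shiftUp, if_pos hj, kostkaStrip]
    omega
  have hglue : glue r c ν (rectFill c (rowCounts c T)) (shiftUp ν (kostkaStrip c T)) = T := by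
    conv_rhs => rw [← glue_strip hT.2.2.2]
    exact glue_congr (fun i j hi hj => (eq_rectFill_rowCounts hν hT hTle hi hj).symm) hshift
  have hS0 : content ν (kostkaStrip c T) 0 = 0 := content_zero fun i j hj => by
    have := h2 i j hj
    rw [kostkaStrip]
    omega
  have hNc : ∀ v, rowCounts c T v ≤ c := fun v => (card_filter_le _ _).trans (card_range c).le
  have hN : ∀ v, 1 ≤ v → v ≤ r → rowCounts c T v = kostkaCounts c n ν (kostkaStrip c T) v := by
    refine fun v hv1 hv => eq_kostkaCounts hcn hS0 (fun w hw1 hw => ⟨hNc w, ?_⟩) hv1 hv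
    have := content_glue_rectFill (S := kostkaStrip c T) hνr (fun i _ => hNc (i + 1)) hw1
      (by omega : w ≤ r + 1)
    rwa [hglue, hcont w hw1 (by omega), if_pos hw, eq_comm] at this
  calc kostkaFill r c n ν (kostkaStrip c T)
      = glue r c ν (rectFill c (rowCounts c T)) (shiftUp ν (kostkaStrip c T)) :=
        glue_congr (fun i j hi _ => by rw [rectFill, rectFill, hN (i + 1) (by omega) hi])
          fun _ _ _ => rfl
    _ = T := hglue

theorem kostkaStrip_mem (hν : Antitone ν) (hνr : ∀ i, r ≤ i → ν i = 0) (hcn : n ≤ c)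
    (hT : IsSSYT (addRect r c ν) T) (hTle : ∀ i j, j < addRect r c ν i → T i j ≤ r + 1)
    (hcont : content (addRect r c ν) T 1 = n) :
    IsSSYT ν (kostkaStrip c T) ∧ ∀ i j, j < ν i → kostkaStrip c T i j ≤ r := by
  refine ⟨(hT.strip hνr).sub_one fun i j hj => two_le_strip hν hνr hcn hT hcont hj,
    fun i j hj => ?_⟩
  have := hTle i (c + j) (add_lt_addRect hνr hj)
  rw [kostkaStrip]
  omega

theorem kostkaStrip_kostkaFill (hνr : ∀ i, r ≤ i → ν i = 0) (hS : IsSSYT ν S) :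
    kostkaStrip c (kostkaFill r c n ν S) = S := by
  funext i j
  have := congrFun₂ (strip_glue (c := c) (R := rectFill c (kostkaCounts c n ν S)) hνr
    hS.shiftUp.2.2.2) i j
  rw [kostkaStrip, kostkaFill, this, shiftUp]
  split_ifs with hj
  · rfl
  · exact (hS.2.2.2 i j (by omega)).symm

theorem kostka_addRect (hν : Antitone ν) (hνr : ∀ i, r ≤ i → ν i = 0) (hcn : n ≤ c)
    (hsum : r * c + ∑ i ∈ range r, ν i = n * (r + 1)) :
    kostka (addRect r c ν) n (r + 1) = ssytCount ν r := by
  refine (Set.InvOn.bijOn (f := kostkaStrip c) (f' := kostkaFill r c n ν) ⟨?_, ?_⟩ ?_ ?_).ncard_eq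
  · rintro T ⟨hT, hTle, hcont⟩
    exact eq_kostkaFill hν hνr hcn hT hTle hcont
  · rintro S ⟨hS, -⟩
    exact kostkaStrip_kostkaFill hνr hS
  · rintro T ⟨hT, hTle, hcont⟩
    exact kostkaStrip_mem hν hνr hcn hT hTle (hcont 1 le_rfl (by omega))
  · rintro S ⟨hS, hSr⟩
    exact kostkaFill_mem hν hνr hcn hsum hS hSr

end Kostka

theorem sum_range_intCast_mul_two (r : ℕ) : (∑ i ∈ range r, (i : ℤ)) * 2 = r * (r - 1) := by
  induction r with
  | zero => simp
  | succ r ih =>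
    rw [sum_range_succ]
    push_cast
    linarith

theorem sum_sub_one_sub_two_mul (r : ℕ) : ∑ i : Fin r, ((r : ℤ) - 1 - 2 * (i : ℕ)) = 0 := by
  rw [Fin.sum_univ_eq_sum_range (fun i => (r : ℤ) - 1 - 2 * i), sum_sub_distrib, ← mul_sum,
    sum_const, card_range, nsmul_eq_mul]
  linarith [sum_range_intCast_mul_two r]

theorem LaurentPolynomial.prod_T {R ι : Type*} [CommSemiring R] (s : Finset ι) (b : ι → ℤ) :
    ∏ i ∈ s, (LaurentPolynomial.T (b i) : LaurentPolynomial R)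
      = LaurentPolynomial.T (∑ i ∈ s, b i) := by
  simp only [LaurentPolynomial.T, AddMonoidAlgebra.prod_single, prod_const_one]

section Schur

variable {r c : ℕ} {ν : ℕ → ℕ} {T : ℕ → ℕ → ℕ}

theorem IsSSYT.eq_of_addRect (hT : IsSSYT (addRect r c ν) T) (hν : Antitone ν)
    (hTr : ∀ i j, j < addRect r c ν i → T i j ≤ r) {i j : ℕ} (hi : i < r) (hj : j < c) :
    T i j = i + 1 :=
  le_antisymm (hT.le_of_addRect hν (d := 0) hTr hi hj)
    (hT.succ_le (antitone_addRect hν) (by rw [addRect_of_lt hi]; omega))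

theorem content_addRect_of_le (hν : Antitone ν) (hνr : ∀ i, r ≤ i → ν i = 0)
    (hT : IsSSYT (addRect r c ν) T) (hTr : ∀ i j, j < addRect r c ν i → T i j ≤ r) {v : ℕ}
    (hv1 : 1 ≤ v) (hv : v ≤ r) :
    content (addRect r c ν) T v = c + content ν (fun i j => T i (c + j)) v := by
  conv_lhs => rw [← glue_strip hT.2.2.2]
  rw [content_glue hνr]
  congr 1
  have hrow : ∀ i ∈ range r, #{j ∈ range c | T i j = v} = if v - 1 = i then c else 0 := by
    intro i hi
    have hT' : ∀ j ∈ range c, T i j = i + 1 := fun j hj =>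
      hT.eq_of_addRect hν hTr (mem_range.1 hi) (mem_range.1 hj)
    split_ifs with hvi
    · rw [filter_true_of_mem fun j hj => by rw [hT' j hj]; omega, card_range]
    · rw [card_eq_zero, filter_eq_empty_iff]
      intro j hj
      rw [hT' j hj]
      omega
  rw [sum_congr rfl hrow, sum_ite_eq, if_pos (mem_range.2 (by omega))]

theorem kostkaC_addRect_add (hν : Antitone ν) (hνr : ∀ i, r ≤ i → ν i = 0) (μ : Fin r → ℕ) :
    kostkaC (addRect r c ν) r (fun u => μ u + c) = kostkaC ν r μ := by
  refine (Set.InvOn.bijOn (f := fun T i j => T i (c + j)) (f' := glue r c ν fun i _ => i + 1)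
    ⟨?_, ?_⟩ ?_ ?_).ncard_eq
  · rintro T ⟨hT, hTr, -⟩
    conv_rhs => rw [← glue_strip hT.2.2.2]
    exact glue_congr (fun i j hi hj => (hT.eq_of_addRect hν hTr hi hj).symm) fun _ _ _ => rfl
  · rintro S ⟨hS, -⟩
    exact strip_glue hνr hS.2.2.2
  · rintro T ⟨hT, hTr, hμ⟩
    refine ⟨hT.strip hνr, fun i j hj => hTr i (c + j) (add_lt_addRect hνr hj), fun u => ?_⟩
    have := hμ u
    rw [content_addRect_of_le hν hνr hT hTr (Nat.le_add_left 1 u) u.isLt] at this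
    exact Nat.add_left_cancel (this.trans (add_comm _ _))
  · rintro S ⟨hS, hSr, hμ⟩
    have hT : IsSSYT (addRect r c ν) (glue r c ν (fun i _ => i + 1) S) :=
      isSSYT_glue hν hS (fun _ _ _ _ => by omega) (fun _ _ _ _ => le_rfl)
        (fun _ _ _ _ => by omega) fun _ _ _ _ hνi => hS.succ_le hν hνi
    have hTr : ∀ i j, j < addRect r c ν i → glue r c ν (fun i _ => i + 1) S i j ≤ r :=
      fun i j => glue_le (fun _ _ hi _ => hi) hSr
    refine ⟨hT, hTr, fun u => ?_⟩
    rw [content_addRect_of_le hν hνr hT hTr (Nat.le_add_left 1 u) u.isLt, strip_glue hνr hS.2.2.2,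
      hμ u, add_comm]

theorem kostkaC_addRect_eq_zero (hν : Antitone ν) (hνr : ∀ i, r ≤ i → ν i = 0) {μ : Fin r → ℕ}
    {u : Fin r} (hu : μ u < c) : kostkaC (addRect r c ν) r μ = 0 := by
  rw [kostkaC]
  convert Set.ncard_empty (ℕ → ℕ → ℕ)
  refine Set.eq_empty_of_forall_notMem fun T ⟨hT, hTr, hμ⟩ => ?_
  have := content_addRect_of_le hν hνr hT hTr (Nat.le_add_left 1 u) u.isLt
  rw [hμ u] at this
  omega

theorem kostkaC_eq_zero (hνr : ∀ i, r ≤ i → ν i = 0) {μ : Fin r → ℕ} {u : Fin r}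
    (hu : ∑ i ∈ range r, ν i < μ u) : kostkaC ν r μ = 0 := by
  rw [kostkaC]
  convert Set.ncard_empty (ℕ → ℕ → ℕ)
  refine Set.eq_empty_of_forall_notMem fun T ⟨_, _, hμ⟩ => ?_
  have := content_le T (u + 1) hνr
  rw [hμ u] at this
  omega

theorem kostkaC_addRect_eq_zero_of_notMem (hν : Antitone ν) (hνr : ∀ i, r ≤ i → ν i = 0)
    {W : ℕ} (hW : ∑ i ∈ range r, ν i ≤ W) {μ : Fin r → ℕ}
    (hμ : μ ∉ (Fintype.piFinset fun _ : Fin r => range (W + 1)).image fun μ u => μ u + c) :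
    kostkaC (addRect r c ν) r μ = 0 := by
  obtain ⟨u, hu⟩ | hlow := em (∃ u, μ u < c)
  · exact kostkaC_addRect_eq_zero hν hνr hu
  have hμc : (fun u => (μ u - c) + c) = μ :=
    funext fun u => Nat.sub_add_cancel (not_lt.1 (not_exists.1 hlow u))
  obtain ⟨u, hu⟩ : ∃ u, W < μ u - c := by
    by_contra! h
    exact hμ (mem_image.2 ⟨_, Fintype.mem_piFinset.2 fun u => mem_range.2 (by
      have := h u; omega), hμc⟩)
  rw [← hμc, kostkaC_addRect_add hν hνr]
  exact kostkaC_eq_zero hνr (u := u) (by omega)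

theorem schur_addRect (hr : 0 < r) (hν : Antitone ν) (hνr : ∀ i, r ≤ i → ν i = 0) {W : ℕ}
    (hW : ∑ i ∈ range r, ν i ≤ W) :
    schur r (addRect r c ν) (r * c + W) = (∏ i, MvPolynomial.X i) ^ c * schur r ν W := by
  have hinj : Set.InjOn (fun (μ : Fin r → ℕ) u => μ u + c)
      ↑(Fintype.piFinset fun _ : Fin r => range (W + 1)) :=
    fun μ _ μ' _ h => funext fun u => Nat.add_right_cancel (congrFun h u)
  have hsub : (Fintype.piFinset fun _ : Fin r => range (W + 1)).image (fun μ u => μ u + c)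
      ⊆ Fintype.piFinset fun _ : Fin r => range (r * c + W + 1) := by
    intro μ' hμ'
    obtain ⟨μ, hμ, rfl⟩ := mem_image.1 hμ'
    simp only [Fintype.mem_piFinset, mem_range] at hμ ⊢
    intro u
    have := hμ u
    have : c ≤ r * c := Nat.le_mul_of_pos_left c hr
    omega
  rw [schur, schur, ← sum_subset hsub fun μ _ hμ => by
      simp [kostkaC_addRect_eq_zero_of_notMem hν hνr hW hμ],
    sum_image hinj, mul_sum]
  refine sum_congr rfl fun μ _ => ?_
  rw [kostkaC_addRect_add hν hνr, mul_smul_comm, ← prod_pow, ← prod_mul_distrib]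
  simp only [pow_add, mul_comm]

theorem schurSpecU_addRect (hr : 0 < r) (hν : Antitone ν) (hνr : ∀ i, r ≤ i → ν i = 0) {W : ℕ}
    (hW : ∑ i ∈ range r, ν i ≤ W) :
    schurSpecU r (addRect r c ν) (r * c + W) = schurSpecU r ν W := by
  rw [schurSpecU, schurSpecU, schur_addRect hr hν hνr hW, map_mul, map_pow, map_prod]
  simp only [MvPolynomial.aeval_X]
  rw [LaurentPolynomial.prod_T, ← mul_sum, sum_sub_one_sub_two_mul, mul_zero,
    LaurentPolynomial.T_zero, one_pow, one_mul]

end Schur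

theorem two_mul_sum_Icc_sub (m : ℕ) (t : ℤ) :
    2 * ∑ j ∈ Icc 1 m, ((j : ℤ) - t) = m * (m + 1) - 2 * m * t := by
  induction m with
  | zero => simp
  | succ m ih =>
    rw [sum_Icc_succ_top (by omega), mul_add, ih]
    push_cast
    ring

theorem kappa_eq_sum (r : ℕ) (lam : ℕ → ℕ) :
    kappa r lam = ∑ i ∈ range r, ((lam i : ℤ) * (lam i + 1) - 2 * lam i * (i + 1)) := by
  rw [kappa, mul_sum]
  exact sum_congr rfl fun i _ => two_mul_sum_Icc_sub _ _

theorem kappa_addRect (r c : ℕ) (ν : ℕ → ℕ) :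
    kappa r (addRect r c ν)
      = kappa r ν + 2 * c * ∑ i ∈ range r, (ν i : ℤ) + r * c * (c - r) := by
  have hrow : ∀ i ∈ range r,
      ((addRect r c ν i : ℕ) : ℤ) * (addRect r c ν i + 1) - 2 * addRect r c ν i * (i + 1)
        = ((ν i : ℤ) * (ν i + 1) - 2 * ν i * (i + 1)) + 2 * c * ν i + (c * (c + 1) - 2 * c)
          - 2 * c * i := by
    intro i hi
    rw [addRect_of_lt (mem_range.1 hi)]
    push_cast
    ring
  rw [kappa_eq_sum, kappa_eq_sum, sum_congr rfl hrow]
  simp only [sum_add_distrib, sum_sub_distrib, ← mul_sum, sum_const, card_range, nsmul_eq_mul]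
  linear_combination (-(c : ℤ)) * sum_range_intCast_mul_two r

section Tuples

variable {r n : ℕ}

theorem antitone_nu (a : Fin (r - 1) → ℕ) : Antitone (nu r a) :=
  antitone_nat_of_succ_le fun j => sum_le_sum fun k _ => by split_ifs <;> omega

theorem nu_of_le (a : Fin (r - 1) → ℕ) {i : ℕ} (hi : r - 1 ≤ i) : nu r a i = 0 :=
  sum_eq_zero fun k _ => if_neg (by omega)

theorem nu_eq_add (a : Fin (r - 1) → ℕ) {j : ℕ} (hj : j < r - 1) :
    nu r a j = a ⟨j, hj⟩ + nu r a (j + 1) := by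
  have hsplit : ∀ k : Fin (r - 1), (if j ≤ (k : ℕ) then a k else 0)
      = (if ⟨j, hj⟩ = k then a k else 0) + (if j + 1 ≤ (k : ℕ) then a k else 0) := by
    intro k
    rcases eq_or_ne (⟨j, hj⟩ : Fin (r - 1)) k with rfl | hk
    · simp
    · have : j ≠ k := fun h => hk (Fin.ext h)
      rw [if_neg hk, zero_add]
      split_ifs <;> omega
  rw [nu, nu, sum_congr rfl fun k _ => hsplit k, sum_add_distrib, sum_ite_eq, if_pos (mem_univ _)]

theorem wgt_eq_sum_nu (a : Fin (r - 1) → ℕ) : wgt r a = ∑ i ∈ range r, nu r a i := by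
  unfold wgt nu
  rw [sum_comm]
  refine sum_congr rfl fun k _ => ?_
  have : {i ∈ range r | i ≤ (k : ℕ)} = range (k + 1) := by
    ext i
    simp only [mem_filter, mem_range]
    omega
  rw [← sum_filter, this, sum_const, card_range, smul_eq_mul]

theorem ext_of_lt (f : Fin r → ℕ) {i : ℕ} (hi : i < r) : ext r f i = f ⟨i, hi⟩ := dif_pos hi

theorem ext_le_ext {f : Fin r → ℕ} (hf : ∀ i j : Fin r, i ≤ j → f j ≤ f i) {i j : ℕ}
    (hij : i ≤ j) (hj : j < r) : ext r f j ≤ ext r f i := by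
  rw [ext_of_lt f hj, ext_of_lt f (by omega)]
  exact hf _ _ hij

theorem sum_range_ext (f : Fin r → ℕ) : ∑ i ∈ range r, ext r f i = ∑ i, f i := by
  rw [← Fin.sum_univ_eq_sum_range]
  exact sum_congr rfl fun i _ => ext_of_lt f i.isLt

end Tuples

def diffTuple (r : ℕ) (f : Fin r → ℕ) : Fin (r - 1) → ℕ := fun k => ext r f k - ext r f (k + 1)

/-- Solves `r * c + wgt r a = n * (r + 1)` for `c`; the division is exact on `admissibleTuples`. -/
def lastPart (r n : ℕ) (a : Fin (r - 1) → ℕ) : ℕ := n + (n - wgt r a) / r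

def partOfTuple (r n : ℕ) (a : Fin (r - 1) → ℕ) : Fin r → ℕ := fun i => lastPart r n a + nu r a i

def partitionsLastGe (r n : ℕ) : Finset (Fin r → ℕ) :=
  (Fintype.piFinset fun _ : Fin r => Finset.range (n * (r + 1) + 1)).filter
    (fun f : Fin r → ℕ => (∀ i j : Fin r, i ≤ j → f j ≤ f i) ∧
      (∑ i, f i = n * (r + 1)) ∧ (∀ i : Fin r, (i : ℕ) = r - 1 → n ≤ f i))

def admissibleTuples (r n : ℕ) : Finset (Fin (r - 1) → ℕ) :=
  (Fintype.piFinset fun _ : Fin (r - 1) => Finset.range (n + 1)).filter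
    (fun a : Fin (r - 1) → ℕ => wgt r a ≤ n ∧ wgt r a % r = n % r)

section Bijection

variable {r n : ℕ}

theorem ext_partOfTuple (a : Fin (r - 1) → ℕ) :
    ext r (partOfTuple r n a) = addRect r (lastPart r n a) (nu r a) := by
  funext i
  unfold _root_.ext addRect
  split_ifs <;> rfl

theorem le_lastPart (a : Fin (r - 1) → ℕ) : n ≤ lastPart r n a := Nat.le_add_right _ _

theorem mul_lastPart_add_wgt {a : Fin (r - 1) → ℕ} (hwgt : wgt r a ≤ n)
    (hmod : wgt r a % r = n % r) : r * lastPart r n a + wgt r a = n * (r + 1) := by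
  have hdvd : r ∣ n - wgt r a := (Nat.modEq_iff_dvd' hwgt).1 hmod
  rw [lastPart, mul_add, Nat.mul_div_cancel' hdvd]
  have : n * (r + 1) = r * n + n := by ring
  omega

theorem nu_diffTuple {f : Fin r → ℕ} (hf : ∀ i j : Fin r, i ≤ j → f j ≤ f i) {i : ℕ}
    (hi : i < r) : nu r (diffTuple r f) i = ext r f i - ext r f (r - 1) := by
  obtain ⟨d, hd⟩ : ∃ d, i + d = r - 1 := ⟨r - 1 - i, by omega⟩
  induction d generalizing i with
  | zero =>
    obtain rfl : i = r - 1 := hd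
    rw [nu_of_le _ le_rfl, Nat.sub_self]
  | succ d ih =>
    rw [nu_eq_add _ (by omega), ih (by omega) (by omega)]
    simp only [diffTuple]
    have := ext_le_ext hf (show i ≤ i + 1 by omega) (by omega)
    have := ext_le_ext hf (show i + 1 ≤ r - 1 by omega) (by omega)
    omega

theorem wgt_diffTuple {f : Fin r → ℕ} (hf : ∀ i j : Fin r, i ≤ j → f j ≤ f i) :
    wgt r (diffTuple r f) + r * ext r f (r - 1) = ∑ i, f i := by
  have hterm : ∀ i ∈ range r, nu r (diffTuple r f) i + ext r f (r - 1) = ext r f i := by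
    intro i hi
    have hi := mem_range.1 hi
    rw [nu_diffTuple hf hi]
    have := ext_le_ext hf (show i ≤ r - 1 by omega) (by omega)
    omega
  rw [wgt_eq_sum_nu, ← sum_range_ext, ← sum_congr rfl hterm, sum_add_distrib, sum_const,
    card_range, smul_eq_mul]

theorem diffTuple_mem (hr : 0 < r) {f : Fin r → ℕ} (hf : f ∈ partitionsLastGe r n) :
    diffTuple r f ∈ admissibleTuples r n := by
  obtain ⟨-, hanti, hsum, hlast⟩ := mem_filter.1 hf
  have hL : n ≤ ext r f (r - 1) := by
    rw [ext_of_lt f (by omega)]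
    exact hlast _ rfl
  have hw : wgt r (diffTuple r f) + r * ext r f (r - 1) = n + r * n := by
    rw [wgt_diffTuple hanti, hsum]
    ring
  have := Nat.mul_le_mul_left r hL
  refine mem_filter.2 ⟨Fintype.mem_piFinset.2 fun k => mem_range.2 ?_, by omega, ?_⟩
  · have : ((k : ℕ) + 1) * diffTuple r f k ≤ wgt r (diffTuple r f) :=
      single_le_sum (f := fun k : Fin (r - 1) => ((k : ℕ) + 1) * diffTuple r f k)
        (fun _ _ => Nat.zero_le _) (mem_univ k)
    have := Nat.le_mul_of_pos_left (diffTuple r f k) (by omega : 0 < (k : ℕ) + 1)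
    omega
  · calc wgt r (diffTuple r f) % r
        = (wgt r (diffTuple r f) + r * ext r f (r - 1)) % r := (Nat.add_mul_mod_self_left ..).symm
      _ = n % r := by rw [hw, Nat.add_mul_mod_self_left]

theorem partOfTuple_diffTuple (hr : 0 < r) {f : Fin r → ℕ} (hf : f ∈ partitionsLastGe r n) :
    partOfTuple r n (diffTuple r f) = f := by
  obtain ⟨hwgt, hmod⟩ := (mem_filter.1 (diffTuple_mem hr hf)).2
  obtain ⟨-, hanti, hsum, -⟩ := mem_filter.1 hf
  have hlast : lastPart r n (diffTuple r f) = ext r f (r - 1) := by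
    have h1 := mul_lastPart_add_wgt hwgt hmod
    have h2 := wgt_diffTuple hanti
    exact Nat.eq_of_mul_eq_mul_left hr (by omega)
  funext i
  have := ext_le_ext hanti (show (i : ℕ) ≤ r - 1 by omega) (by omega)
  have : ext r f i = f i := ext_of_lt f i.isLt
  rw [partOfTuple, hlast, nu_diffTuple hanti i.isLt]
  omega

theorem diffTuple_partOfTuple (a : Fin (r - 1) → ℕ) : diffTuple r (partOfTuple r n a) = a := by
  funext k
  have : nu r a k = a k + nu r a (k + 1) := nu_eq_add a k.isLt
  rw [diffTuple, ext_partOfTuple, addRect_of_lt (by omega), addRect_of_lt (by omega)]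
  omega

theorem partOfTuple_mem (hr : 0 < r) {a : Fin (r - 1) → ℕ} (ha : a ∈ admissibleTuples r n) :
    partOfTuple r n a ∈ partitionsLastGe r n := by
  obtain ⟨hwgt, hmod⟩ := (mem_filter.1 ha).2
  have hsum := mul_lastPart_add_wgt hwgt hmod
  have hnu : ∀ i, nu r a i ≤ wgt r a := fun i => by
    rw [wgt_eq_sum_nu]
    exact (antitone_nu a (Nat.zero_le i)).trans
      (single_le_sum (f := nu r a) (fun _ _ => Nat.zero_le _) (mem_range.2 hr))
  refine mem_filter.2 ⟨Fintype.mem_piFinset.2 fun i => mem_range.2 ?_,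
    fun i j hij => Nat.add_le_add_left (antitone_nu a hij) _, ?_, fun i _ => ?_⟩
  · have := hnu i
    have := Nat.le_mul_of_pos_left (lastPart r n a) hr
    rw [partOfTuple]
    omega
  · rw [← sum_range_ext, ext_partOfTuple, sum_addRect, ← wgt_eq_sum_nu, hsum]
  · exact le_add_right (le_lastPart a)

end Bijection

theorem exponent_addRect (r c : ℕ) (ν : ℕ → ℕ) :
    (r : ℤ) * kappa r (addRect r c ν) - ((r * c + ∑ i ∈ range r, ν i : ℕ) : ℤ) ^ 2
        + (r : ℤ) ^ 2 * ((r * c + ∑ i ∈ range r, ν i : ℕ) : ℤ)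
      = (r : ℤ) * kappa r ν + (r : ℤ) ^ 2 * ((∑ i ∈ range r, ν i : ℕ) : ℤ)
        - ((∑ i ∈ range r, ν i : ℕ) : ℤ) ^ 2 := by
  rw [kappa_addRect]
  push_cast
  ring

theorem rectangular_sum_eq_tuple_sum_general
    (r p n : ℕ) (hr : 2 ≤ r) :
    (∑ f ∈ (Fintype.piFinset fun _ : Fin r => Finset.range (n * (r + 1) + 1)).filter
        (fun f : Fin r → ℕ => (∀ i j : Fin r, i ≤ j → f j ≤ f i) ∧
          (∑ i, f i = n * (r + 1)) ∧ (∀ i : Fin r, (i : ℕ) = r - 1 → n ≤ f i)),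
      (kostka (ext r f) n (r + 1) : ℤ) •
        (LaurentPolynomial.T ((p : ℤ) *
            ((r : ℤ) * kappa r (ext r f) - ((n * (r + 1) : ℕ) : ℤ) ^ 2
              + (r : ℤ) ^ 2 * ((n * (r + 1) : ℕ) : ℤ)))
          * schurSpecU r (ext r f) (n * (r + 1)))) =
    ∑ a ∈ (Fintype.piFinset fun _ : Fin (r - 1) => Finset.range (n + 1)).filter
        (fun a : Fin (r - 1) → ℕ => wgt r a ≤ n ∧ wgt r a % r = n % r),
      (ssytCount (nu r a) r : ℤ) •
        (LaurentPolynomial.T ((p : ℤ) *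
            ((r : ℤ) * kappa r (nu r a) + (r : ℤ) ^ 2 * ((wgt r a : ℕ) : ℤ)
              - ((wgt r a : ℕ) : ℤ) ^ 2))
          * schurSpecU r (nu r a) (wgt r a)) := by
  have hr0 : 0 < r := by omega
  refine (sum_nbij' (partOfTuple r n) (diffTuple r) (fun a ha => partOfTuple_mem hr0 ha)
    (fun f hf => diffTuple_mem hr0 hf) (fun a _ => diffTuple_partOfTuple a)
    (fun f hf => partOfTuple_diffTuple hr0 hf) fun a ha => ?_).symm
  obtain ⟨hwgt, hmod⟩ := (mem_filter.1 ha).2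
  have hsum : r * lastPart r n a + ∑ i ∈ range r, nu r a i = n * (r + 1) := by
    rw [← wgt_eq_sum_nu]
    exact mul_lastPart_add_wgt hwgt hmod
  have hνr : ∀ i, r ≤ i → nu r a i = 0 := fun i hi => nu_of_le a (by omega)
  rw [ext_partOfTuple, kostka_addRect (antitone_nu a) hνr (le_lastPart a) hsum, ← hsum,
    schurSpecU_addRect hr0 (antitone_nu a) hνr le_rfl, exponent_addRect, wgt_eq_sum_nu]

/-- Let `r ≥ 2`, `p ≥ 1`, `n ≥ 0`.  In `ℤ[u, u⁻¹]` (with `q = u^{2r}`):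
`Σ_λ K_{λ,(n)^{r+1}} u^{p(rκ_λ - |λ|² + r²|λ|)} s_λ(u^{r(r-1)}, …, u^{r(1-r)})`,
summed over partitions `λ ⊢ n(r+1)` with `ℓ(λ) ≤ r` and `λ_r ≥ n`, equals
`Σ_{a ∈ C_n} d(a) u^{p(rκ_{ν(a)} + r²|ν(a)| - |ν(a)|²)} s_{ν(a)}(u^{r(r-1)}, …, u^{r(1-r)})`,
where `C_n = {a ∈ ℤ_{≥0}^{r-1} : Σ k a_k ≤ n, Σ k a_k ≡ n (mod r)}` and `d(a)` is the
number of SSYT of shape `ν(a)` with entries in `{1, …, r}`. -/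
theorem rectangular_sum_eq_tuple_sum
    (r p n : ℕ) (hr : 2 ≤ r) (hp : 1 ≤ p) :
    (∑ f ∈ (Fintype.piFinset fun _ : Fin r => Finset.range (n * (r + 1) + 1)).filter
        (fun f : Fin r → ℕ => (∀ i j : Fin r, i ≤ j → f j ≤ f i) ∧
          (∑ i, f i = n * (r + 1)) ∧ (∀ i : Fin r, (i : ℕ) = r - 1 → n ≤ f i)),
      (kostka (ext r f) n (r + 1) : ℤ) •
        (LaurentPolynomial.T ((p : ℤ) *
            ((r : ℤ) * kappa r (ext r f) - ((n * (r + 1) : ℕ) : ℤ) ^ 2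
              + (r : ℤ) ^ 2 * ((n * (r + 1) : ℕ) : ℤ)))
          * schurSpecU r (ext r f) (n * (r + 1)))) =
    ∑ a ∈ (Fintype.piFinset fun _ : Fin (r - 1) => Finset.range (n + 1)).filter
        (fun a : Fin (r - 1) → ℕ => wgt r a ≤ n ∧ wgt r a % r = n % r),
      (ssytCount (nu r a) r : ℤ) •
        (LaurentPolynomial.T ((p : ℤ) *
            ((r : ℤ) * kappa r (nu r a) + (r : ℤ) ^ 2 * ((wgt r a : ℕ) : ℤ)
              - ((wgt r a : ℕ) : ℤ) ^ 2))
          * schurSpecU r (nu r a) (wgt r a)) :=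
  rectangular_sum_eq_tuple_sum_general r p n hr
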